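/- Let N ≥ 1 and let p be an (N+2)-partite no-signaling probability distribution with binary inputs and binary outputs for each party (party A and parties B₁, …, B_{N+1}): p assigns to each input tuple a probability distribution over output tuples such that the marginal on any subset of parties' outputs is independent of the other parties' inputs. For each i, let S_i denote the CHSH value between A and B_i, computed from the bipartite marginal of p on parties A and B_i: S_i = Σ_{x,y ∈ Fin 2} (−1)^{x·y} Σ_{a,b} (−1)^{a+b} p_{A,B_i}(a, b | x, y). Then there is at most one index i with |S_i| > 2; i.e., if |S_j| > 2 and |S_k| > 2 then j = k. -/
import Mathlib


open Finset

/-- An `m`-partite probability distribution with binary inputs and outputs,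
`p outputs inputs`, is no-signaling if it is nonnegative, normalized, and for
every subset `S` of the parties the marginal distribution of the outputs of the
parties outside `S` is independent of the inputs of the parties in `S`. -/
def IsNoSignaling {m : ℕ} (p : (Fin m → Fin 2) → (Fin m → Fin 2) → ℝ) : Prop :=
  (∀ g x, 0 ≤ p g x) ∧
  (∀ x, ∑ g : Fin m → Fin 2, p g x = 1) ∧
  (∀ S : Finset (Fin m), ∀ x x' : Fin m → Fin 2, (∀ i ∉ S, x i = x' i) →
    ∀ a : Fin m → Fin 2,
      (∑ g : Fin m → Fin 2, if ∀ i ∉ S, g i = a i then p g x else 0) =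
        ∑ g : Fin m → Fin 2, if ∀ i ∉ S, g i = a i then p g x' else 0)

/-- The CHSH value between party `A` (index `0`) and party `B_i` (index `i`),
computed from the bipartite marginal of `p` on parties `0` and `i` (all other
parties' inputs are set to `0`; by no-signaling this choice is irrelevant). -/
def chshValWith {m : ℕ} [NeZero m] (p : (Fin m → Fin 2) → (Fin m → Fin 2) → ℝ)
    (i : Fin m) : ℝ :=
  ∑ x : Fin 2, ∑ y : Fin 2, (-1 : ℝ) ^ ((x : ℕ) * (y : ℕ)) *
    ∑ g : Fin m → Fin 2, (-1 : ℝ) ^ ((g 0 : ℕ) + (g i : ℕ)) *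
      p g (fun j => if j = 0 then x else if j = i then y else 0)

lemma ns_marginal {m : ℕ} {p : (Fin m → Fin 2) → (Fin m → Fin 2) → ℝ}
    (hp : IsNoSignaling p) (T : Finset (Fin m))
    (f : (Fin m → Fin 2) → ℝ)
    (hf : ∀ g g' : Fin m → Fin 2, (∀ i ∈ T, g i = g' i) → f g = f g')
    (x x' : Fin m → Fin 2) (hx : ∀ i ∈ T, x i = x' i) :
    ∑ g : Fin m → Fin 2, f g * p g x = ∑ g : Fin m → Fin 2, f g * p g x' := by
  classical
  set S : Finset (Fin m) := Tᶜ with hS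
  set rep : (Fin m → Fin 2) → (Fin m → Fin 2) := fun g i => if i ∈ S then 0 else g i with hrep
  have key : ∀ u : Fin m → Fin 2,
      ∑ g : Fin m → Fin 2, f g * p g u
        = ∑ a : Fin m → Fin 2, f a * ∑ g : Fin m → Fin 2, (if rep g = a then p g u else 0) := by
    intro u
    have hfr : ∀ g, f g = f (rep g) := by
      intro g
      refine hf g (rep g) ?_
      intro i hi
      have : i ∉ S := by simp [hS, hi]
      simp [hrep, this]
    calc ∑ g : Fin m → Fin 2, f g * p g u
        = ∑ g : Fin m → Fin 2, f (rep g) * p g u :=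
          Finset.sum_congr rfl fun g _ => by rw [← hfr g]
      _ = ∑ g : Fin m → Fin 2, ∑ a : Fin m → Fin 2,
            (if rep g = a then f a * p g u else 0) := by
          refine Finset.sum_congr rfl fun g _ => ?_
          rw [Finset.sum_ite_eq]
          simp
      _ = ∑ a : Fin m → Fin 2, ∑ g : Fin m → Fin 2,
            (if rep g = a then f a * p g u else 0) := Finset.sum_comm
      _ = ∑ a : Fin m → Fin 2, f a * ∑ g : Fin m → Fin 2,
            (if rep g = a then p g u else 0) := by
          refine Finset.sum_congr rfl fun a _ => ?_
          rw [Finset.mul_sum]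
          refine Finset.sum_congr rfl fun g _ => ?_
          split <;> simp
  rw [key x, key x']
  refine Finset.sum_congr rfl fun a _ => ?_
  congr 1
  by_cases ha : ∀ i ∈ S, a i = 0
  · have hiff : ∀ g : Fin m → Fin 2, rep g = a ↔ ∀ i ∉ S, g i = a i := by
      intro g
      constructor
      · intro h i hi
        rw [← h]
        simp [hrep, hi]
      · intro h
        funext i
        by_cases hi : i ∈ S
        · simp [hrep, hi, ha i hi]
        · simp [hrep, hi, h i hi]
    have h1 : ∀ u : Fin m → Fin 2,
        (∑ g : Fin m → Fin 2, if rep g = a then p g u else 0)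
          = ∑ g : Fin m → Fin 2, if ∀ i ∉ S, g i = a i then p g u else 0 := by
      intro u
      refine Finset.sum_congr rfl fun g _ => ?_
      simp only [hiff g]
    rw [h1 x, h1 x']
    refine hp.2.2 S x x' ?_ a
    intro i hi
    exact hx i (by simpa [hS] using hi)
  · push_neg at ha
    obtain ⟨i0, hi0, hai0⟩ := ha
    have hne : ∀ g : Fin m → Fin 2, ¬ (rep g = a) := by
      intro g h
      apply hai0
      rw [← h]
      simp [hrep, hi0]
    simp [hne]

lemma fin2cases (i : Fin 2) : i = 0 ∨ i = 1 := by fin_cases i <;> simp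

/-- **Corollary of Theorem 1.** If `N + 2` parties (A and B₁, …, B_{N+1}) share
a no-signaling distribution with binary inputs and outputs, then A violates the
CHSH inequality with at most one of the parties `B_i`. -/
theorem chsh_monogamy_many_parties
    (N : ℕ) (hN : 1 ≤ N)
    (p : (Fin (N + 2) → Fin 2) → (Fin (N + 2) → Fin 2) → ℝ)
    (hp : IsNoSignaling p)
    (j k : Fin (N + 2)) (hj : j ≠ 0) (hk : k ≠ 0)
    (hSj : |chshValWith p j| > 2) (hSk : |chshValWith p k| > 2) :
    j = k := by
  classical
  by_contra hjk
  have hkj : k ≠ j := fun h => hjk h.symm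
  set u : Fin 2 → Fin 2 → Fin 2 → (Fin (N + 2) → Fin 2) :=
    fun x y z l => if l = 0 then x else if l = j then y else if l = k then z else 0 with hu
  set fj : (Fin (N + 2) → Fin 2) → ℝ :=
    fun g => (-1 : ℝ) ^ ((g 0 : ℕ) + (g j : ℕ)) with hfj
  set fk : (Fin (N + 2) → Fin 2) → ℝ :=
    fun g => (-1 : ℝ) ^ ((g 0 : ℕ) + (g k : ℕ)) with hfk
  set fjk : (Fin (N + 2) → Fin 2) → ℝ :=
    fun g => (-1 : ℝ) ^ ((g j : ℕ) + (g k : ℕ)) with hfjk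
  set Ej : Fin 2 → Fin 2 → Fin 2 → ℝ :=
    fun x y z => ∑ g : Fin (N + 2) → Fin 2, fj g * p g (u x y z) with hEj
  set Ek : Fin 2 → Fin 2 → Fin 2 → ℝ :=
    fun x y z => ∑ g : Fin (N + 2) → Fin 2, fk g * p g (u x y z) with hEk
  set G : Fin 2 → Fin 2 → Fin 2 → ℝ :=
    fun x y z => ∑ g : Fin (N + 2) → Fin 2, fjk g * p g (u x y z) with hG
  -- inputs of the CHSH value agree with u _ _ 0 resp. u _ 0 _
  have huj : ∀ x y : Fin 2,
      (fun l => if l = 0 then x else if l = j then y else 0) = u x y 0 := by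
    intro x y
    funext l
    by_cases h0 : l = 0 <;> by_cases hlj : l = j <;> by_cases hlk : l = k <;>
      simp [hu, h0, hlj, hlk, hj, hk, hjk, hkj]
  have huk : ∀ x z : Fin 2,
      (fun l => if l = 0 then x else if l = k then z else 0) = u x 0 z := by
    intro x z
    funext l
    by_cases h0 : l = 0 <;> by_cases hlj : l = j <;> by_cases hlk : l = k <;>
      simp [hu, h0, hlj, hlk, hj, hk, hjk, hkj]
  -- expansions of the CHSH values
  have hSj' : chshValWith p j = Ej 0 0 0 + Ej 0 1 0 + Ej 1 0 0 - Ej 1 1 0 := by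
    simp only [chshValWith, Fin.sum_univ_two, huj, hEj, hfj]
    norm_num
    ring
  have hSk' : chshValWith p k = Ek 0 0 0 + Ek 0 0 1 + Ek 1 0 0 - Ek 1 0 1 := by
    simp only [chshValWith, Fin.sum_univ_two, huk, hEk, hfk]
    norm_num
    ring
  -- invariance properties from no-signaling
  have hujv : ∀ x y z : Fin 2, u x y z 0 = x ∧ u x y z j = y ∧ u x y z k = z := by
    intro x y z
    refine ⟨by simp [hu], by simp [hu, hj], by simp [hu, hk, hkj]⟩
  have hEjz : ∀ x y z : Fin 2, Ej x y z = Ej x y 0 := by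
    intro x y z
    refine ns_marginal hp {0, j} fj ?_ _ _ ?_
    · intro g g' h
      simp only [hfj]
      rw [h 0 (by simp), h j (by simp)]
    · intro i hi
      rcases Finset.mem_insert.1 hi with rfl | hi
      · rw [(hujv x y z).1, (hujv x y 0).1]
      · rw [Finset.mem_singleton.1 hi, (hujv x y z).2.1, (hujv x y 0).2.1]
  have hEky : ∀ x y z : Fin 2, Ek x y z = Ek x 0 z := by
    intro x y z
    refine ns_marginal hp {0, k} fk ?_ _ _ ?_
    · intro g g' h
      simp only [hfk]
      rw [h 0 (by simp), h k (by simp)]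
    · intro i hi
      rcases Finset.mem_insert.1 hi with rfl | hi
      · rw [(hujv x y z).1, (hujv x 0 z).1]
      · rw [Finset.mem_singleton.1 hi, (hujv x y z).2.2, (hujv x 0 z).2.2]
  have hGx : ∀ x y z : Fin 2, G x y z = G 0 y z := by
    intro x y z
    refine ns_marginal hp {j, k} fjk ?_ _ _ ?_
    · intro g g' h
      simp only [hfjk]
      rw [h j (by simp), h k (by simp)]
    · intro i hi
      rcases Finset.mem_insert.1 hi with rfl | hi
      · rw [(hujv x y z).2.1, (hujv 0 y z).2.1]
      · rw [Finset.mem_singleton.1 hi, (hujv x y z).2.2, (hujv 0 y z).2.2]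
  -- the main pointwise bound
  have bound : ∀ (x y z : Fin 2) (ε δ : ℝ), (ε = 1 ∨ ε = -1) → (δ = 1 ∨ δ = -1) →
      ε * Ej x y z + δ * Ek x y z ≤ 1 + ε * δ * G x y z := by
    intro x y z ε δ hε hδ
    have hpt : ∀ g : Fin (N + 2) → Fin 2,
        ε * fj g + δ * fk g ≤ 1 + ε * δ * fjk g := by
      intro g
      rcases fin2cases (g 0) with h0 | h0 <;> rcases fin2cases (g j) with hj' | hj' <;>
        rcases fin2cases (g k) with hk' | hk' <;>
        rcases hε with rfl | rfl <;> rcases hδ with rfl | rfl <;>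
        simp [hfj, hfk, hfjk, h0, hj', hk'] <;> norm_num
    calc ε * Ej x y z + δ * Ek x y z
        = ∑ g : Fin (N + 2) → Fin 2, (ε * fj g + δ * fk g) * p g (u x y z) := by
          simp only [hEj, hEk, Finset.mul_sum, ← Finset.sum_add_distrib]
          exact Finset.sum_congr rfl fun g _ => by ring
      _ ≤ ∑ g : Fin (N + 2) → Fin 2, (1 + ε * δ * fjk g) * p g (u x y z) := by
          refine Finset.sum_le_sum fun g _ => ?_
          exact mul_le_mul_of_nonneg_right (hpt g) (hp.1 g _)
      _ = 1 + ε * δ * G x y z := by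
          have h1 : ∑ g : Fin (N + 2) → Fin 2, (1 + ε * δ * fjk g) * p g (u x y z)
              = (∑ g : Fin (N + 2) → Fin 2, p g (u x y z))
                + ε * δ * ∑ g : Fin (N + 2) → Fin 2, fjk g * p g (u x y z) := by
            rw [Finset.mul_sum, ← Finset.sum_add_distrib]
            exact Finset.sum_congr rfl fun g _ => by ring
          rw [h1, hp.2.1, hG]
  -- instantiate the 16 bounds
  have one1 : (1 : ℝ) = 1 ∨ (1 : ℝ) = -1 := Or.inl rfl
  have onem : (-1 : ℝ) = 1 ∨ (-1 : ℝ) = -1 := Or.inr rfl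
  have b1pp := bound 0 0 1 1 1 one1 one1
  have b1pm := bound 0 0 1 1 (-1) one1 onem
  have b1mp := bound 0 0 1 (-1) 1 onem one1
  have b1mm := bound 0 0 1 (-1) (-1) onem onem
  have b2pp := bound 0 1 0 1 1 one1 one1
  have b2pm := bound 0 1 0 1 (-1) one1 onem
  have b2mp := bound 0 1 0 (-1) 1 onem one1
  have b2mm := bound 0 1 0 (-1) (-1) onem onem
  have b3pp := bound 1 0 1 1 1 one1 one1
  have b3pm := bound 1 0 1 1 (-1) one1 onem
  have b3mp := bound 1 0 1 (-1) 1 onem one1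
  have b3mm := bound 1 0 1 (-1) (-1) onem onem
  have b4pp := bound 1 1 0 1 1 one1 one1
  have b4pm := bound 1 1 0 1 (-1) one1 onem
  have b4mp := bound 1 1 0 (-1) 1 onem one1
  have b4mm := bound 1 1 0 (-1) (-1) onem onem
  have e1 : Ej 0 0 1 = Ej 0 0 0 := hEjz 0 0 1
  have e2 : Ej 1 0 1 = Ej 1 0 0 := hEjz 1 0 1
  have e3 : Ek 0 1 0 = Ek 0 0 0 := hEky 0 1 0
  have e4 : Ek 1 1 0 = Ek 1 0 0 := hEky 1 1 0
  have e5 : G 1 0 1 = G 0 0 1 := hGx 1 0 1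
  have e6 : G 1 1 0 = G 0 1 0 := hGx 1 1 0
  rcases abs_cases (chshValWith p j) with ⟨ha1, _⟩ | ⟨ha1, _⟩ <;>
    rcases abs_cases (chshValWith p k) with ⟨ha2, _⟩ | ⟨ha2, _⟩ <;>
    linarith [hSj, hSk, hSj', hSk', e1, e2, e3, e4, e5, e6,
      b1pp, b1pm, b1mp, b1mm, b2pp, b2pm, b2mp, b2mm,
      b3pp, b3pm, b3mp, b3mm, b4pp, b4pm, b4mp, b4mm]
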